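/- arXiv:1610.04039 — 2 statements merged into one kernel-verified Lean document; each statement's English description precedes it below -/
import Mathlib

section
/- Consider a two-player infinite game on a set A in which players alternately choose elements of A, and suppose the payoff set W ⊆ A^ω for player I is finitely decided: for every play p ∈ W there exists n such that every play extending p↾n lies in W. Then the game is determined: either player I or player II has a winning strategy. -/
/-- The play of the game determined by strategies `σ` (for player I, moving at even stages)
and `τ` (for player II, moving at odd stages). -/
noncomputable def gamePlay {A : Type*} (σ τ : List A → A) : ℕ → A := fun n =>
  Nat.strongRecOn n (fun n ih =>
    let h : List A := List.ofFn fun i : Fin n => ih i i.isLt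
    if n % 2 = 0 then σ h else τ h)

/-!
If player I has no winning strategy from the empty position, player II can always move so that
I still has none: at a position where I moves, a winning strategy from any successor is one from
the position itself, and at a position where II moves, winning strategies from all successors can
be glued into one from the position. But since `W` is open, every play in `W` passes through a
position all of whose extensions lie in `W`, and from there I wins by any strategy following the
position. So II's strategy keeps the play outside `W`.
-/

namespace GaleStewart

variable {A : Type*}

noncomputable def gamePos (σ τ : List A → A) (n : ℕ) : List A :=
  List.ofFn fun i : Fin n => gamePlay σ τ i

variable {σ σ' τ : List A → A}

theorem gamePlay_eq (σ τ : List A → A) (n : ℕ) :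
    gamePlay σ τ n = if n % 2 = 0 then σ (gamePos σ τ n) else τ (gamePos σ τ n) :=
  Nat.strongRecOn_eq _ n

@[simp]
theorem length_gamePos (σ τ : List A → A) (n : ℕ) : (gamePos σ τ n).length = n := by
  simp [gamePos]

@[simp]
theorem getElem_gamePos (σ τ : List A → A) (n i : ℕ) (h : i < (gamePos σ τ n).length) :
    (gamePos σ τ n)[i] = gamePlay σ τ i := by
  simp [gamePos]

theorem gamePos_succ (σ τ : List A → A) (n : ℕ) :
    gamePos σ τ (n + 1) = gamePos σ τ n ++ [gamePlay σ τ n] := by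
  rw [gamePos, List.ofFn_succ', List.concat_eq_append]
  rfl

theorem gamePlay_congr_left
    (h : ∀ n, n % 2 = 0 → σ' (gamePos σ τ n) = σ (gamePos σ τ n)) :
    gamePlay σ' τ = gamePlay σ τ := by
  funext n
  induction n using Nat.strongRecOn with
  | ind n ih =>
    have hpos : gamePos σ' τ n = gamePos σ τ n :=
      List.ext_getElem (by simp) fun i hi _ => by
        simpa using ih i (by simpa using hi)
    rw [gamePlay_eq, gamePlay_eq, hpos]
    split_ifs with hn
    · exact h n hn
    · rfl

/-- The strategy `σ`, used at the stages `i` with `i % 2 = r`, produces the moves of `s`. -/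
def Consistent (σ : List A → A) (r : ℕ) (s : List A) : Prop :=
  ∀ i (h : i < s.length), i % 2 = r → σ (s.take i) = s[i]

theorem Consistent.of_append {r : ℕ} {s t : List A} (h : Consistent σ r (s ++ t)) :
    Consistent σ r s := by
  intro i hi hr
  have := h i (by simp; omega) hr
  rwa [List.take_append_of_le_length hi.le, List.getElem_append_left hi] at this

theorem Consistent.append_singleton {r : ℕ} {s : List A} (h : Consistent σ r s) :
    Consistent σ r (s ++ [σ s]) := by
  intro i hi hr
  rcases (by simpa [Nat.lt_succ_iff] using hi : i ≤ s.length).lt_or_eq with hlt | rfl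
  · rw [List.take_append_of_le_length hlt.le, List.getElem_append_left hlt]
    exact h i hlt hr
  · simp

theorem Consistent.append_singleton_of_ne {r : ℕ} {s : List A} (h : Consistent σ r s)
    {a : A} (hr : s.length % 2 ≠ r) : Consistent σ r (s ++ [a]) := by
  intro i hi hir
  have hlt : i < s.length := by
    rcases (by simpa [Nat.lt_succ_iff] using hi : i ≤ s.length).lt_or_eq with hlt | rfl
    · exact hlt
    · exact absurd hir hr
  rw [List.take_append_of_le_length hlt.le, List.getElem_append_left hlt]
  exact h i hlt hir

theorem gamePos_eq_take {s : List A} (hσ : Consistent σ 0 s) (hτ : Consistent τ 1 s) :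
    ∀ n ≤ s.length, gamePos σ τ n = s.take n
  | 0, _ => by simp [gamePos]
  | n + 1, hn => by
    have hpos := gamePos_eq_take hσ hτ n (by omega)
    rw [gamePos_succ, hpos, gamePlay_eq, hpos, List.take_succ_eq_append_getElem hn]
    split_ifs with hpar
    · rw [hσ n hn hpar]
    · rw [hτ n hn (by omega)]

theorem gamePlay_eq_getElem {s : List A} (hσ : Consistent σ 0 s) (hτ : Consistent τ 1 s)
    {i : ℕ} (hi : i < s.length) : gamePlay σ τ i = s[i] := by
  simpa [List.getElem_take, List.getElem?_eq_getElem hi] using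
    congrArg (·[i]?) (gamePos_eq_take hσ hτ (i + 1) hi)

def IsWinningPosition (W : Set (ℕ → A)) (s : List A) : Prop :=
  ∃ σ : List A → A, Consistent σ 0 s ∧
    ∀ τ : List A → A, Consistent τ 1 s → gamePlay σ τ ∈ W

variable {W : Set (ℕ → A)} {s : List A}

theorem IsWinningPosition.of_append_singleton {a : A} (hev : s.length % 2 = 0)
    (h : IsWinningPosition W (s ++ [a])) : IsWinningPosition W s := by
  obtain ⟨σ, hσ, hwin⟩ := h
  exact ⟨σ, hσ.of_append, fun τ hτ => hwin τ (hτ.append_singleton_of_ne (by omega))⟩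

theorem IsWinningPosition.of_forall_extends [Nonempty A]
    (h : ∀ q : ℕ → A, (∀ i (hi : i < s.length), q i = s[i]) → q ∈ W) :
    IsWinningPosition W s := by
  let σ : List A → A := fun t => s.getD t.length (Classical.arbitrary A)
  have hσ : Consistent σ 0 s := fun i hi _ => by
    simp [σ, hi.le, hi]
  exact ⟨σ, hσ, fun τ hτ => h _ fun i hi => gamePlay_eq_getElem hσ hτ hi⟩

theorem IsWinningPosition.of_forall_append_singleton [Nonempty A] (hod : s.length % 2 = 1)
    (h : ∀ a, IsWinningPosition W (s ++ [a])) : IsWinningPosition W s := by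
  choose σ hσ hwin using h
  let a₀ := Classical.arbitrary A
  -- follow `σ a`, where `a` is II's reply at `s`
  let σ₀ : List A → A := fun t => σ (t.getD s.length a₀) t
  have hσ₀ : Consistent σ₀ 0 s := fun i hi hr => by
    have hd : (s.take i).getD s.length a₀ = a₀ := List.getD_eq_default _ _ (by simp)
    simp only [σ₀, hd]
    exact (hσ a₀).of_append i hi hr
  refine ⟨σ₀, hσ₀, fun τ hτ => ?_⟩
  have hτa := hτ.append_singleton
  suffices gamePlay σ₀ τ = gamePlay (σ (τ s)) τ from this ▸ hwin _ τ hτa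
  refine gamePlay_congr_left fun n hn => ?_
  rcases lt_or_gt_of_ne (show n ≠ s.length by omega) with hlt | hgt
  · rw [gamePos_eq_take (hσ _).of_append hτ n hlt.le]
    have hd : (s.take n).getD s.length a₀ = a₀ := List.getD_eq_default _ _ (by simp)
    simp only [σ₀, hd]
    rw [(hσ a₀).of_append n hlt hn, (hσ _).of_append n hlt hn]
  · have hd : (gamePos (σ (τ s)) τ n).getD s.length a₀ = τ s := by
      rw [List.getD_eq_getElem _ _ (by simpa), getElem_gamePos,
        gamePlay_eq_getElem (hσ _) hτa (by simp)]
      simp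
    simp only [σ₀, hd]

variable [Nonempty A]

noncomputable def avoidingStrategy (W : Set (ℕ → A)) : List A → A :=
  fun s => Classical.epsilon fun a => ¬ IsWinningPosition W (s ++ [a])

theorem not_isWinningPosition_gamePos_avoidingStrategy (h₀ : ¬ IsWinningPosition W [])
    (σ : List A → A) : ∀ n, ¬ IsWinningPosition W (gamePos σ (avoidingStrategy W) n)
  | 0 => by simpa [gamePos] using h₀
  | n + 1 => by
    have ih := not_isWinningPosition_gamePos_avoidingStrategy h₀ σ n
    rw [gamePos_succ]
    rcases Nat.mod_two_eq_zero_or_one n with hn | hn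
    · exact fun h => ih (h.of_append_singleton (by simpa))
    · rw [gamePlay_eq, if_neg (by omega)]
      refine Classical.epsilon_spec (p := fun a => ¬ IsWinningPosition W (_ ++ [a])) ?_
      by_contra! hall
      exact ih (.of_forall_append_singleton (by simpa) hall)

theorem exists_isWinningPosition_gamePos
    (hopen : ∀ p ∈ W, ∃ n : ℕ, ∀ q : ℕ → A, (∀ i < n, q i = p i) → q ∈ W)
    (hp : gamePlay σ τ ∈ W) : ∃ n, IsWinningPosition W (gamePos σ τ n) := by
  obtain ⟨n, hn⟩ := hopen _ hp
  exact ⟨n, .of_forall_extends fun q hq => hn q fun i hi =>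
    (hq i (by simpa)).trans (getElem_gamePos ..)⟩

end GaleStewart

open GaleStewart in
/-- Gale–Stewart for finitely decided (open) payoff sets: either player I or player II has a
winning strategy. -/
theorem open_game_determined {A : Type*} [Nonempty A] (W : Set (ℕ → A))
    (hopen : ∀ p ∈ W, ∃ n : ℕ, ∀ q : ℕ → A, (∀ i < n, q i = p i) → q ∈ W) :
    (∃ σ : List A → A, ∀ τ : List A → A, gamePlay σ τ ∈ W) ∨
    (∃ τ : List A → A, ∀ σ : List A → A, gamePlay σ τ ∉ W) := by
  by_cases h₀ : IsWinningPosition W []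
  · obtain ⟨σ, -, hσ⟩ := h₀
    exact .inl ⟨σ, fun τ => hσ τ fun i hi => absurd hi (Nat.not_lt_zero i)⟩
  · refine .inr ⟨avoidingStrategy W, fun σ hp => ?_⟩
    obtain ⟨n, hn⟩ := exists_isWinningPosition_gamePos hopen hp
    exact not_isWinningPosition_gamePos_avoidingStrategy h₀ σ n hn
end

section
/- There exists an Ulam matrix on ω₁: a family (A_{α,n} : α < ω₁, n < ω) of subsets of ω₁ such that (1) for each fixed n, the sets A_{α,n} for distinct α < ω₁ are pairwise disjoint, and (2) for each fixed α < ω₁, the set ω₁ \ ⋃_{n<ω} A_{α,n} is countable. -/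
/-!
Fix, for every `β < ω₁`, an injection `f β` of the countable set of ordinals below `β` into `ℕ`,
and put `β` into the entry `(α, n)` when `α < β` and `f β α = n`. Two entries of one row cannot
share a `β`, by injectivity of `f β`; and column `α` covers every `β > α`, so what it misses lies
in the countable set `Iic α`.
-/

open Cardinal Set

section UlamMatrix

variable {X : Type*} [LinearOrder X]

def ulamMatrix (S : Set X) (f : X → X → ℕ) (α : X) (n : ℕ) : Set X :=
  {β ∈ S | α < β ∧ f β α = n}

variable {S : Set X} {f : X → X → ℕ}

lemma ulamMatrix_subset (α : X) (n : ℕ) : ulamMatrix S f α n ⊆ S :=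
  fun _ hβ => hβ.1

lemma disjoint_ulamMatrix (hf : ∀ β ∈ S, InjOn (f β) (Iio β)) {α α' : X} (hne : α ≠ α')
    (n : ℕ) : Disjoint (ulamMatrix S f α n) (ulamMatrix S f α' n) := by
  rw [Set.disjoint_left]
  rintro β ⟨hβS, hαβ, rfl⟩ ⟨-, hα'β, hcode⟩
  exact hne (hf β hβS hα'β hαβ hcode).symm

lemma diff_iUnion_ulamMatrix_subset_Iic (α : X) :
    S \ ⋃ n, ulamMatrix S f α n ⊆ Iic α := by
  rintro β ⟨hβS, hβ⟩
  by_contra hαβ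
  exact hβ (mem_iUnion.2 ⟨f β α, hβS, not_le.1 hαβ, rfl⟩)

end UlamMatrix

namespace Ordinal

universe u v

lemma countable_Iio_of_lt_ord_aleph_one {o : Ordinal} (ho : o < (aleph 1).ord) :
    (Iio o).Countable := by
  rw [← le_aleph0_iff_set_countable, Cardinal.mk_Iio_ordinal, lift_le_aleph0,
    ← lt_aleph_one_iff, ← lt_ord]
  exact ho

lemma countable_Iic_of_lt_ord_aleph_one {o : Ordinal} (ho : o < (aleph 1).ord) :
    (Iic o).Countable := by
  rw [← Iio_insert]
  exact (countable_Iio_of_lt_ord_aleph_one ho).insert o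

/-- In `ulam_matrix_exists` the columns and the rows are ordinals of possibly different
universes; this moves the columns below `ω₁` into the universe of the rows. -/
lemma exists_injOn_mapsTo_Iio_ord {c₁ : Cardinal.{u}} {c₂ : Cardinal.{v}}
    (h : Cardinal.lift.{v} c₁ ≤ Cardinal.lift.{u} c₂) :
    ∃ e : Ordinal.{u} → Ordinal.{v}, InjOn e (Iio c₁.ord) ∧ MapsTo e (Iio c₁.ord) (Iio c₂.ord) := by
  obtain ⟨g⟩ : Nonempty (Iio c₁.ord ↪ Iio c₂.ord) := by
    rw [← lift_mk_le', Cardinal.mk_Iio_ordinal, Cardinal.mk_Iio_ordinal, card_ord, card_ord,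
      Cardinal.lift_lift, Cardinal.lift_lift]
    simpa using Cardinal.lift_le.{max (u + 1) (v + 1)}.2 h
  set e := Function.extend Subtype.val (fun α => (g α : Ordinal)) 0
  have he : ∀ α : Iio c₁.ord, e α = g α := Subtype.val_injective.extend_apply _ _
  refine ⟨e, fun α hα α' hα' heq => ?_, fun α hα => ?_⟩
  · rw [he ⟨α, hα⟩, he ⟨α', hα'⟩] at heq
    exact congrArg Subtype.val (g.injective (Subtype.ext heq))
  · rw [he ⟨α, hα⟩]
    exact (g _).2

end Ordinal

/-- There exists an Ulam matrix on `ω₁`. -/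
theorem ulam_matrix_exists :
    ∃ A : Ordinal → ℕ → Set Ordinal,
      (∀ α n, A α n ⊆ Set.Iio (Cardinal.aleph 1).ord) ∧
      (∀ n : ℕ, ∀ α < (Cardinal.aleph 1).ord, ∀ β < (Cardinal.aleph 1).ord,
        α ≠ β → Disjoint (A α n) (A β n)) ∧
      (∀ α < (Cardinal.aleph 1).ord,
        (Set.Iio (Cardinal.aleph 1).ord \ ⋃ n : ℕ, A α n).Countable) := by
  obtain ⟨e, he_inj, he_lt⟩ := Ordinal.exists_injOn_mapsTo_Iio_ord
    (c₁ := aleph 1) (c₂ := aleph 1) (by simp)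
  have hcode : ∀ β ∈ Iio (aleph 1).ord, ∃ g : Ordinal → ℕ, InjOn g (Iio β) := fun β hβ =>
    countable_iff_exists_injOn.1 (Ordinal.countable_Iio_of_lt_ord_aleph_one hβ)
  choose! f hf using hcode
  refine ⟨fun α => ulamMatrix _ f (e α), fun α => ulamMatrix_subset (e α), ?_, ?_⟩
  · intro n α hα α' hα' hne
    exact disjoint_ulamMatrix hf (fun heq => hne (he_inj hα hα' heq)) n
  · intro α hα
    exact (Ordinal.countable_Iic_of_lt_ord_aleph_one (he_lt hα)).mono
      (diff_iUnion_ulamMatrix_subset_Iic _)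
end
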